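/- Let M = p^n · M_1 with p prime, p ∤ M_1, and suppose p > M_1. Let A ⊕ B = ℤ_M be a tiling. Then the tiling has uniform splitting parity in the p direction: either all fibers z * F_p (z ∈ ℤ_M) split with parity (A, B), or all split with parity (B, A). -/

import Mathlib

/-- `A ⊕ B = ℤ_M`: every element of `ZMod M` has a unique representation `a + b`
with `a ∈ A`, `b ∈ B`. -/
def IsTiling (M : ℕ) (A B : Finset (ZMod M)) : Prop :=
  ∀ z : ZMod M, ∃! ab : ZMod M × ZMod M, ab.1 ∈ A ∧ ab.2 ∈ B ∧ ab.1 + ab.2 = z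

/-- The fiber `x * F_p = {x + ν·(M/p) : 0 ≤ ν < p}` in the `p` direction. -/
def fiberSet (M p : ℕ) (x : ZMod M) : Set (ZMod M) :=
  {z | ∃ ν < p, z = x + ((ν * (M / p) : ℕ) : ZMod M)}

/-- `Σ_A(Z)`: the elements of `A` used in representations of elements of `Z`
in the tiling `A ⊕ B`. -/
def SigmaSet (M : ℕ) (A B : Finset (ZMod M)) (Z : Set (ZMod M)) : Set (ZMod M) :=
  {a | a ∈ A ∧ ∃ b ∈ B, a + b ∈ Z}

/-- `Z` splits with parity `(A, B)`: `p^n` divides all differences of elements of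
`Σ_A(Z)`, and `p^{n-1}` exactly divides differences of distinct elements of `Σ_B(Z)`
(divisibility of differences measured on canonical representatives in `ZMod M`). -/
def SplitsParity (M p n : ℕ) (A B : Finset (ZMod M)) (Z : Set (ZMod M)) : Prop :=
  (∀ a ∈ SigmaSet M A B Z, ∀ a' ∈ SigmaSet M A B Z, (p ^ n : ℕ) ∣ ((a - a' : ZMod M)).val) ∧
  (∀ b ∈ SigmaSet M B A Z, ∀ b' ∈ SigmaSet M B A Z, b ≠ b' →
    (p ^ (n - 1) : ℕ) ∣ ((b - b' : ZMod M)).val ∧ ¬ (p ^ n : ℕ) ∣ ((b - b' : ZMod M)).val)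


/- ### Auxiliary machinery ### -/

open Finset AddMonoidAlgebra

section Counting

variable {M : ℕ} [NeZero M] {A B : Finset (ZMod M)}

/-- card of the tiling: `|A| * |B| = M`. -/
lemma tiling_card (h : IsTiling M A B) : A.card * B.card = M := by
  have : (A ×ˢ B).card = (Finset.univ : Finset (ZMod M)).card := by
    apply Finset.card_bij (fun ab _ => ab.1 + ab.2)
    · intro a _; exact mem_univ _
    · intro ab hab ab' hab' heq
      simp only [mem_product] at hab hab'
      exact (h (ab.1 + ab.2)).unique ⟨hab.1, hab.2, rfl⟩ ⟨hab'.1, hab'.2, heq.symm⟩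
    · intro z _
      obtain ⟨ab, ⟨h1, h2, h3⟩, -⟩ := h z
      exact ⟨ab, Finset.mem_product.2 ⟨h1, h2⟩, h3⟩
  rwa [Finset.card_product, Finset.card_univ, ZMod.card] at this

lemma card_dvd_left (h : IsTiling M A B) : A.card ∣ M := ⟨B.card, (tiling_card h).symm⟩

/-- ∃!-pairs vs filter card one. -/
lemma existsUnique_iff_filter_card_one {α : Type*} [DecidableEq α] {s : Finset α}
    {P : α → Prop} [DecidablePred P] :
    (∃! a, a ∈ s ∧ P a) ↔ (s.filter P).card = 1 := by
  constructor
  · rintro ⟨a, ⟨ha, hPa⟩, hu⟩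
    rw [Finset.card_eq_one]
    exact ⟨a, Finset.eq_singleton_iff_unique_mem.2 ⟨Finset.mem_filter.2 ⟨ha, hPa⟩,
      fun x hx => hu x ⟨(Finset.mem_filter.1 hx).1, (Finset.mem_filter.1 hx).2⟩⟩⟩
  · intro hc
    obtain ⟨a, ha⟩ := Finset.card_eq_one.1 hc
    refine ⟨a, ?_, fun x hx => ?_⟩
    · have := Finset.mem_filter.1 (ha ▸ Finset.mem_singleton_self a)
      exact this
    · have : x ∈ s.filter P := Finset.mem_filter.2 hx
      rw [ha, Finset.mem_singleton] at this; exact this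

lemma prime_step {q : ℕ} (hq : q.Prime) (hqM : ¬ q ∣ M) (h : IsTiling M A B) (z : ZMod M) :
    ∃! ab : ZMod M × ZMod M, ab.1 ∈ A ∧ ab.2 ∈ B ∧ (q : ZMod M) * ab.1 + ab.2 = z := by
  classical
  haveI : Fact q.Prime := ⟨hq⟩
  set R := AddMonoidAlgebra (ZMod q) (ZMod M) with hRdef
  haveI hch : CharP R q :=
    charP_of_injective_ringHom (R := ZMod q)
      (f := AddMonoidAlgebra.singleZeroRingHom (R := ZMod q) (M := ZMod M))
      (fun x y hxy => by
        have := congrArg (fun f : R => f.coeff (0 : ZMod M)) hxy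
        simpa [AddMonoidAlgebra.singleZeroRingHom, Finsupp.singleAddHom] using this) q
  haveI : ExpChar R q := ExpChar.prime hq
  set sgl : ZMod M → R := fun w => AddMonoidAlgebra.single w 1 with hsgl
  have sgl_mul : ∀ a b : ZMod M, sgl a * sgl b = sgl (a + b) := by
    intro a b; exact (AddMonoidAlgebra.single_mul_single _ _ _ _).trans (by rw [mul_one])
  set EA : R := ∑ a ∈ A, sgl a with hEA
  set EB : R := ∑ b ∈ B, sgl b with hEB
  set EN : R := ∑ w : ZMod M, sgl w with hEN
  -- Step a : EA * EB = EN
  have hAB : EA * EB = EN := by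
    rw [hEA, hEB, Finset.sum_mul_sum]
    have : ∀ a ∈ A, ∑ b ∈ B, sgl a * sgl b = ∑ b ∈ B, sgl (a + b) := by
      intro a _; exact Finset.sum_congr rfl fun b _ => sgl_mul a b
    rw [Finset.sum_congr rfl this, ← Finset.sum_product']
    apply Finset.sum_bij (fun ab _ => ab.1 + ab.2)
    · intro a _; exact mem_univ _
    · intro ab hab ab' hab' heq
      simp only [mem_product] at hab hab'
      exact (h (ab.1 + ab.2)).unique ⟨hab.1, hab.2, rfl⟩ ⟨hab'.1, hab'.2, heq.symm⟩
    · intro w _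
      obtain ⟨ab, ⟨h1, h2, h3⟩, -⟩ := h w
      exact ⟨ab, Finset.mem_product.2 ⟨h1, h2⟩, h3⟩
    · intro ab _; rfl
  -- Step b : EA * EN = |A| • EN
  have hAN : EA * EN = (A.card : ZMod q) • EN := by
    rw [hEA, Finset.sum_mul]
    have : ∀ a ∈ A, sgl a * EN = EN := by
      intro a _
      rw [hEN, Finset.mul_sum]
      have h1 : ∀ w ∈ (univ : Finset (ZMod M)), sgl a * sgl w = sgl (a + w) :=
        fun w _ => sgl_mul a w
      rw [Finset.sum_congr rfl h1]
      exact Fintype.sum_equiv (Equiv.addLeft a) _ _ (fun w => rfl)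
    rw [Finset.sum_congr rfl this, Finset.sum_const, ← Nat.cast_smul_eq_nsmul (ZMod q)]
  -- powers
  have hANpow : ∀ k : ℕ, EA ^ k * EN = ((A.card : ZMod q)) ^ k • EN := by
    intro k
    induction k with
    | zero => simp
    | succ k ih =>
      rw [pow_succ, mul_assoc, hAN, mul_smul_comm, ih, smul_smul, ← pow_succ']
  -- Frobenius
  have hfrob : EA ^ q = ∑ a ∈ A, sgl (q • a) := by
    rw [hEA, sum_pow_char]
    exact Finset.sum_congr rfl fun a _ => (AddMonoidAlgebra.single_pow _ _ q).trans (by rw [one_pow])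
  have hqcard : ((A.card : ZMod q)) ≠ 0 := by
    rw [Ne, ZMod.natCast_eq_zero_iff]
    exact fun hdvd => hqM (hdvd.trans ⟨B.card, (tiling_card h).symm⟩)
  have key : (∑ a ∈ A, sgl (q • a)) * EB = EN := by
    calc (∑ a ∈ A, sgl (q • a)) * EB = EA ^ q * EB := by rw [hfrob]
    _ = EA ^ (q - 1) * (EA * EB) := by
        have hq1 : q - 1 + 1 = q := Nat.succ_pred_eq_of_pos hq.pos
        rw [← mul_assoc, ← pow_succ, hq1]
    _ = EA ^ (q - 1) * EN := by rw [hAB]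
    _ = ((A.card : ZMod q)) ^ (q - 1) • EN := hANpow _
    _ = EN := by rw [ZMod.pow_card_sub_one_eq_one hqcard, one_smul]
  have key2 : (∑ ab ∈ A ×ˢ B, sgl (q • ab.1 + ab.2)) = EN := by
    rw [← key, hEB, Finset.sum_mul_sum, ← Finset.sum_product']
    exact Finset.sum_congr rfl fun ab _ => (sgl_mul _ _).symm
  set cnt : ZMod M → ℕ :=
    fun w => ((A ×ˢ B).filter (fun ab => q • ab.1 + ab.2 = w)).card with hcnt
  have coeff1 : ∀ (s : Finset (ZMod M × ZMod M)) (g : ZMod M × ZMod M → ZMod M) (w : ZMod M),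
      ((∑ i ∈ s, sgl (g i)) : R).coeff w = ((s.filter (fun i => g i = w)).card : ZMod q) := by
    intro s g w
    rw [show ((∑ i ∈ s, sgl (g i)) : R).coeff w = ∑ i ∈ s, ((sgl (g i) : R).coeff w) by
      rw [AddMonoidAlgebra.coeff_sum, Finsupp.finset_sum_apply]]
    rw [← Finset.sum_boole]
    refine Finset.sum_congr rfl fun i _ => ?_
    rw [hsgl]; simp [Finsupp.single_apply]
  have coeff2 : ∀ w : ZMod M, (EN : R).coeff w = 1 := by
    intro w
    rw [hEN]
    rw [show ((∑ w' : ZMod M, sgl w') : R).coeff w = ∑ w' : ZMod M, ((sgl w' : R).coeff w) by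
      rw [AddMonoidAlgebra.coeff_sum, Finsupp.finset_sum_apply]]
    have : ∀ w' ∈ (univ : Finset (ZMod M)), ((sgl w' : R).coeff w) = if w' = w then (1:ZMod q) else 0 :=
      fun w' _ => by rw [hsgl]; simp [Finsupp.single_apply]
    rw [Finset.sum_congr rfl this, Finset.sum_boole]
    simp [Finset.filter_eq']
  have hcoeff : ∀ w : ZMod M, ((cnt w : ZMod q)) = 1 := by
    intro w
    have := congrArg (fun f : R => f.coeff w) key2
    rw [coeff1 _ _ w, coeff2 w] at this
    exact this
  have hpos : ∀ w : ZMod M, 1 ≤ cnt w := by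
    intro w
    rcases Nat.eq_zero_or_pos (cnt w) with h0 | h1
    · exfalso; have := hcoeff w; rw [h0] at this; simp at this
    · exact h1
  have hsum : ∑ w : ZMod M, cnt w = M := by
    have hfib := Finset.card_eq_sum_card_fiberwise (s := A ×ˢ B) (t := univ)
      (f := fun ab => q • ab.1 + ab.2) (fun x _ => mem_univ _)
    calc ∑ w : ZMod M, cnt w = (A ×ˢ B).card := hfib.symm
    _ = M := by rw [Finset.card_product, tiling_card h]
  have hone : ∀ w : ZMod M, cnt w = 1 := by
    intro w
    by_contra hne
    have h2 : 1 < cnt w := lt_of_le_of_ne (hpos w) (Ne.symm hne)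
    have : ∑ _w : ZMod M, 1 < ∑ w : ZMod M, cnt w :=
      Finset.sum_lt_sum (fun i _ => hpos i) ⟨w, mem_univ w, h2⟩
    rw [hsum] at this
    simp [Finset.card_univ, ZMod.card] at this
  have := existsUnique_iff_filter_card_one
    (s := A ×ˢ B) (P := fun ab => q • ab.1 + ab.2 = z) |>.2 (hone z)
  obtain ⟨ab, ⟨habs, habP⟩, hu⟩ := this
  rw [Finset.mem_product] at habs
  refine ⟨ab, ⟨habs.1, habs.2, by rw [← habP, nsmul_eq_mul]⟩, ?_⟩
  intro y hy
  exact hu y ⟨Finset.mem_product.2 ⟨hy.1, hy.2.1⟩, by rw [nsmul_eq_mul]; exact hy.2.2⟩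

lemma tiling_unit_mul (h : IsTiling M A B) :
    ∀ t : ℕ, t.Coprime M → ∀ z : ZMod M,
      ∃! ab : ZMod M × ZMod M, ab.1 ∈ A ∧ ab.2 ∈ B ∧ (t : ZMod M) * ab.1 + ab.2 = z := by
  intro t
  induction t using Nat.strong_induction_on with
  | _ t ih =>
    intro hco z
    rcases lt_or_ge t 2 with h2 | h2
    · interval_cases t
      · have hM1 : M = 1 := by simpa using hco
        haveI : Subsingleton (ZMod M) := ZMod.subsingleton_iff.2 hM1
        obtain ⟨ab, hab, hu⟩ := h z
        exact ⟨ab, ⟨hab.1, hab.2.1, Subsingleton.elim _ _⟩,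
          fun y hy => hu y ⟨hy.1, hy.2.1, Subsingleton.elim _ _⟩⟩
      · obtain ⟨ab, hab, hu⟩ := h z
        exact ⟨ab, ⟨hab.1, hab.2.1, by rw [Nat.cast_one, one_mul]; exact hab.2.2⟩,
          fun y hy => hu y ⟨hy.1, hy.2.1, by rw [← hy.2.2, Nat.cast_one, one_mul]⟩⟩
    · set q := t.minFac with hqdef
      have hqp : q.Prime := Nat.minFac_prime (by omega)
      set s := t / q with hsdef
      have hts : s * q = t := Nat.div_mul_cancel t.minFac_dvd
      have hsd : s ∣ t := ⟨q, hts.symm⟩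
      have hcos : s.Coprime M := Nat.Coprime.coprime_dvd_left hsd hco
      have hslt : s < t := Nat.div_lt_self (by omega) hqp.one_lt
      have hsu : IsUnit ((s : ZMod M)) := (ZMod.isUnit_iff_coprime s M).2 hcos
      have hqM : ¬ q ∣ M := by
        intro hdvd
        have : q ∣ Nat.gcd t M := Nat.dvd_gcd t.minFac_dvd hdvd
        rw [hco] at this
        exact hqp.one_lt.ne' (Nat.dvd_one.1 this)
      have tiling' := ih s hslt hcos
      set A' := A.image (fun a => (s : ZMod M) * a) with hA'def
      have hA' : IsTiling M A' B := by
        intro w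
        obtain ⟨ab, ⟨ha, hb, he⟩, hu⟩ := tiling' w
        refine ⟨((s : ZMod M) * ab.1, ab.2), ⟨Finset.mem_image_of_mem _ ha, hb, he⟩, ?_⟩
        rintro ⟨y1, y2⟩ ⟨hy1, hy2, hye⟩
        obtain ⟨a, haA, rfl⟩ := Finset.mem_image.1 hy1
        have heq := hu (a, y2) ⟨haA, hy2, hye⟩
        have h1' : a = ab.1 := congrArg Prod.fst heq
        have h2' : y2 = ab.2 := congrArg Prod.snd heq
        exact Prod.ext (by rw [h1']) h2'
      obtain ⟨ab, ⟨ha', hb, he⟩, hu⟩ := prime_step hqp hqM hA' z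
      obtain ⟨a, haA, hae⟩ := Finset.mem_image.1 ha'
      have hcast : ∀ x : ZMod M, (t : ZMod M) * x = (q : ZMod M) * ((s : ZMod M) * x) := by
        intro x
        rw [← hts]; push_cast; ring
      refine ⟨(a, ab.2), ⟨haA, hb, by rw [hcast, hae, he]⟩, ?_⟩
      rintro ⟨y1, y2⟩ ⟨hy1, hy2, hye⟩
      have heq := hu ((s : ZMod M) * y1, y2)
        ⟨Finset.mem_image_of_mem _ hy1, hy2, by rw [← hcast]; exact hye⟩
      have h1' : (s : ZMod M) * y1 = ab.1 := congrArg Prod.fst heq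
      have h2' : y2 = ab.2 := congrArg Prod.snd heq
      have : (s : ZMod M) * y1 = (s : ZMod M) * a := by rw [h1', ← hae]
      exact Prod.ext (hsu.mul_left_cancel this) h2'

/-- Divisor exclusion in unit form. -/
lemma divisor_exclusion (h : IsTiling M A B) {a₁ a₂ b₁ b₂ : ZMod M}
    (ha₁ : a₁ ∈ A) (ha₂ : a₂ ∈ A) (hb₁ : b₁ ∈ B) (hb₂ : b₂ ∈ B)
    (hbne : b₁ ≠ b₂) {u : ZMod M} (hu : IsUnit u)
    (heq : u * (a₁ - a₂) = b₁ - b₂) : False := by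
  set t : ℕ := hu.unit.val.val with htdef
  have hco : t.Coprime M := ZMod.val_coe_unit_coprime hu.unit
  have htu : (t : ZMod M) = u := by
    rw [htdef, ZMod.natCast_zmod_val]
    rfl
  have key := tiling_unit_mul h t hco ((t : ZMod M) * a₁ + b₂)
  have h1 : (t : ZMod M) * a₁ + b₂ = (t : ZMod M) * a₂ + b₁ := by
    have : (t : ZMod M) * (a₁ - a₂) = b₁ - b₂ := by rw [htu]; exact heq
    linear_combination this
  have e1 := key.unique (y₁ := (a₁, b₂)) (y₂ := (a₂, b₁)) ⟨ha₁, hb₂, rfl⟩ ⟨ha₂, hb₁, h1.symm⟩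
  exact hbne ((Prod.ext_iff.1 e1).2.symm)

end Counting

section Padic

lemma dvd_val_iff {M d : ℕ} [NeZero M] (hd : d ∣ M) (x : ZMod M) :
    d ∣ x.val ↔ (ZMod.castHom hd (ZMod d)) x = 0 := by
  rw [ZMod.castHom_apply, ← ZMod.natCast_val, ZMod.natCast_eq_zero_iff]

variable {p n : ℕ}

lemma not_dvd_val_iff_isUnit (hp : p.Prime) (hn : 1 ≤ n) (x : ZMod (p ^ n)) :
    IsUnit x ↔ ¬ p ∣ x.val := by
  haveI : NeZero (p ^ n) := ⟨pow_ne_zero n hp.pos.ne'⟩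
  constructor
  · intro hu hdvd
    have hco : Nat.Coprime x.val (p ^ n) :=
      (ZMod.isUnit_iff_coprime x.val (p ^ n)).1 (by rwa [ZMod.natCast_zmod_val])
    have : p ∣ Nat.gcd x.val (p ^ n) :=
      Nat.dvd_gcd hdvd (dvd_pow_self p (Nat.one_le_iff_ne_zero.1 hn))
    rw [hco] at this
    exact hp.one_lt.ne' (Nat.dvd_one.1 this)
  · intro hnd
    have hco : Nat.Coprime x.val (p ^ n) :=
      Nat.Coprime.pow_right n ((hp.coprime_iff_not_dvd.2 hnd).symm)
    have := (ZMod.isUnit_iff_coprime x.val (p ^ n)).2 hco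
    rwa [ZMod.natCast_zmod_val] at this

lemma padic_isUnit_iff (hp : p.Prime) (hn : 1 ≤ n) (x : ZMod (p ^ n)) :
    IsUnit x ↔ (ZMod.castHom (dvd_pow_self p (Nat.one_le_iff_ne_zero.1 hn)) (ZMod p)) x ≠ 0 := by
  haveI : NeZero (p ^ n) := ⟨pow_ne_zero n hp.pos.ne'⟩
  rw [not_dvd_val_iff_isUnit hp hn, Ne, ← dvd_val_iff]

/-- every nonzero element of `ZMod (p^n)` is `p^v * u` with `v < n` and `u` a unit. -/
lemma exists_pow_mul_unit (hp : p.Prime) {x : ZMod (p ^ n)} (hn : 1 ≤ n) (hx : x ≠ 0) :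
    ∃ v < n, ∃ u : ZMod (p ^ n), IsUnit u ∧ x = (p : ZMod (p ^ n)) ^ v * u := by
  haveI : NeZero (p ^ n) := ⟨pow_ne_zero n hp.pos.ne'⟩
  have hval : x.val ≠ 0 := fun h0 => hx (by rwa [ZMod.val_eq_zero] at h0)
  set v := x.val.factorization p with hv
  set m := x.val / p ^ v with hm
  have hxm : p ^ v * m = x.val := Nat.ordProj_mul_ordCompl_eq_self x.val p
  have hnd : ¬ p ∣ m := Nat.not_dvd_ordCompl hp hval
  have hvlt : v < n := by
    have h1 : p ^ v ≤ x.val := Nat.le_of_dvd (Nat.pos_of_ne_zero hval) (Nat.ordProj_dvd _ _)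
    have h2 : x.val < p ^ n := ZMod.val_lt x
    exact (pow_lt_pow_iff_right₀ hp.one_lt).1 (lt_of_le_of_lt h1 h2)
  refine ⟨v, hvlt, (m : ZMod (p ^ n)), ?_, ?_⟩
  · rw [not_dvd_val_iff_isUnit hp (by omega)]
    intro hd
    rw [ZMod.val_natCast] at hd
    apply hnd
    have h2 : p ∣ p ^ n * (m / p ^ n) := Dvd.dvd.mul_right (dvd_pow_self p (by omega)) _
    have h3 := Nat.dvd_add hd h2
    rwa [Nat.mod_add_div] at h3
  · rw [← ZMod.natCast_zmod_val x, ← hxm]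
    push_cast
    ring

/-- `p^a * u = p^b * w` with units forces `a = b` (for `a b < n`). -/
lemma pow_mul_unit_inj (hp : p.Prime) {a b : ℕ} (ha : a < n) (hb : b < n)
    {u w : ZMod (p ^ n)} (hu : IsUnit u) (hw : IsUnit w)
    (h : (p : ZMod (p ^ n)) ^ a * u = (p : ZMod (p ^ n)) ^ b * w) : a = b := by
  haveI : NeZero (p ^ n) := ⟨pow_ne_zero n hp.pos.ne'⟩
  have hn : 1 ≤ n := by omega
  by_contra hne
  -- wlog a < b
  have main : ∀ a b : ℕ, a < n → b < n → a < b → ∀ u w : ZMod (p ^ n), IsUnit u → IsUnit w →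
      (p : ZMod (p ^ n)) ^ a * u = (p : ZMod (p ^ n)) ^ b * w → False := by
    intro a b ha hb hab u w hu hw h
    have hkey : (p : ZMod (p ^ n)) ^ a * (u - (p : ZMod (p ^ n)) ^ (b - a) * w) = 0 := by
      have : (p : ZMod (p ^ n)) ^ b = (p : ZMod (p ^ n)) ^ a * (p : ZMod (p ^ n)) ^ (b - a) := by
        rw [← pow_add]
        congr 1
        omega
      rw [mul_sub, h, this]
      ring
    have hcu : IsUnit (u - (p : ZMod (p ^ n)) ^ (b - a) * w) := by
      rw [padic_isUnit_iff hp hn]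
      rw [map_sub, map_mul, map_pow, map_natCast, ZMod.natCast_self, zero_pow (by omega : b - a ≠ 0),
        zero_mul, sub_zero]
      rw [← padic_isUnit_iff hp hn]
      exact hu
    have hpa : ((p : ZMod (p ^ n)) ^ a) = 0 := by
      obtain ⟨c, hc⟩ := hcu
      have := congrArg (fun y => y * (↑c⁻¹ : ZMod (p ^ n))) hkey
      simpa [← hc, mul_assoc] using this
    rw [show ((p : ZMod (p ^ n)) ^ a) = ((p ^ a : ℕ) : ZMod (p ^ n)) by push_cast; rfl,
      ZMod.natCast_eq_zero_iff] at hpa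
    have := (Nat.pow_dvd_pow_iff_le_right hp.one_lt).1 hpa
    omega
  rcases Nat.lt_or_ge a b with hab | hab
  · exact main a b ha hb hab u w hu hw h
  · exact main b a hb ha (by omega) w u hw hu h.symm

lemma pow_pred_ne_zero (hp : p.Prime) (hn : 1 ≤ n) :
    ((p : ZMod (p ^ n)) ^ (n - 1)) ≠ 0 := by
  haveI : NeZero (p ^ n) := ⟨pow_ne_zero n hp.pos.ne'⟩
  intro h0
  rw [show ((p : ZMod (p ^ n)) ^ (n-1)) = ((p ^ (n-1) : ℕ) : ZMod (p ^ n)) by push_cast; rfl,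
    ZMod.natCast_eq_zero_iff] at h0
  have := (Nat.pow_dvd_pow_iff_le_right hp.one_lt).1 h0
  omega

/-- dichotomy for a pair of elements summing to an exact-valuation-(n-1) element. -/
lemma pair_dichotomy (hp : p.Prime) (hn : 1 ≤ n) {α β w : ZMod (p ^ n)}
    (hw : IsUnit w) (hsum : α + β = (p : ZMod (p ^ n)) ^ (n - 1) * w) :
    (α = 0 ∧ β ≠ 0) ∨ (β = 0 ∧ α ≠ 0) ∨
      (α ≠ 0 ∧ β ≠ 0 ∧ ∃ t : ZMod (p ^ n), IsUnit t ∧ t * α = β) := by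
  haveI : NeZero (p ^ n) := ⟨pow_ne_zero n hp.pos.ne'⟩
  have hrhs : (p : ZMod (p ^ n)) ^ (n - 1) * w ≠ 0 := by
    intro h0
    obtain ⟨cu, hc⟩ := hw
    have := congrArg (fun y => y * (↑cu⁻¹ : ZMod (p ^ n))) h0
    simp only [← hc, mul_assoc, zero_mul] at this
    rw [Units.mul_inv, mul_one] at this
    exact pow_pred_ne_zero hp hn this
  by_cases hα : α = 0
  · left
    refine ⟨hα, fun hβ => hrhs ?_⟩
    rw [← hsum, hα, hβ, add_zero]
  by_cases hβ : β = 0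
  · right; left
    refine ⟨hβ, fun hα' => hrhs ?_⟩
    rw [← hsum, hα', hβ, add_zero]
  right; right
  refine ⟨hα, hβ, ?_⟩
  obtain ⟨va, hva, ua, hua, hαeq⟩ := exists_pow_mul_unit hp hn hα
  obtain ⟨vb, hvb, ub, hub, hβeq⟩ := exists_pow_mul_unit hp hn hβ
  rcases Nat.lt_trichotomy va vb with hlt | heq | hgt
  · exfalso
    have hc : IsUnit (ua + (p : ZMod (p ^ n)) ^ (vb - va) * ub) := by
      rw [padic_isUnit_iff hp hn]
      rw [map_add, map_mul, map_pow, map_natCast, ZMod.natCast_self,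
        zero_pow (by omega : vb - va ≠ 0), zero_mul, add_zero, ← padic_isUnit_iff hp hn]
      exact hua
    have : (p : ZMod (p ^ n)) ^ va * (ua + (p : ZMod (p ^ n)) ^ (vb - va) * ub)
        = (p : ZMod (p ^ n)) ^ (n - 1) * w := by
      rw [← hsum, hαeq, hβeq, mul_add, ← mul_assoc, ← pow_add,
        show va + (vb - va) = vb from by omega]
    have := pow_mul_unit_inj hp hva (by omega) hc hw this
    omega
  · obtain ⟨U, hU⟩ := hua
    refine ⟨ub * ↑U⁻¹, hub.mul (Units.isUnit _), ?_⟩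
    rw [hαeq, hβeq, heq, ← hU]
    have hUU : (↑U⁻¹ : ZMod (p ^ n)) * ↑U = 1 := U.inv_mul
    calc ub * ↑U⁻¹ * ((p : ZMod (p ^ n)) ^ vb * ↑U)
        = (p : ZMod (p ^ n)) ^ vb * ub * ((↑U⁻¹ : ZMod (p ^ n)) * ↑U) := by ring
    _ = (p : ZMod (p ^ n)) ^ vb * ub := by rw [hUU, mul_one]
  · exfalso
    have hc : IsUnit (ub + (p : ZMod (p ^ n)) ^ (va - vb) * ua) := by
      rw [padic_isUnit_iff hp hn]
      rw [map_add, map_mul, map_pow, map_natCast, ZMod.natCast_self,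
        zero_pow (by omega : va - vb ≠ 0), zero_mul, add_zero, ← padic_isUnit_iff hp hn]
      exact hub
    have : (p : ZMod (p ^ n)) ^ vb * (ub + (p : ZMod (p ^ n)) ^ (va - vb) * ua)
        = (p : ZMod (p ^ n)) ^ (n - 1) * w := by
      rw [← hsum, hαeq, hβeq, mul_add, ← mul_assoc, ← pow_add,
        show vb + (va - vb) = va from by omega]
      ring
    have := pow_mul_unit_inj hp hvb (by omega) hc hw this
    omega

end Padic

lemma eq_dichotomy {X Y : Type*} {P : ℕ} (f : ℕ → X) (g : ℕ → Y)
    (hxor : ∀ ν < P, ∀ μ < P, ν ≠ μ →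
      (f ν = f μ ∧ g ν ≠ g μ) ∨ (g ν = g μ ∧ f ν ≠ f μ)) :
    (∀ ν < P, ∀ μ < P, f ν = f μ) ∨ (∀ ν < P, ∀ μ < P, g ν = g μ) := by
  by_contra hc
  push_neg at hc
  obtain ⟨⟨x, hx, y, hy, hfxy⟩, ⟨s, hs, t, ht, hgst⟩⟩ := hc
  have hxy : x ≠ y := fun h => hfxy (by rw [h])
  have hst : s ≠ t := fun h => hgst (by rw [h])
  have hgxy : g x = g y := by
    rcases hxor x hx y hy hxy with h | h
    · exact absurd h.1 hfxy
    · exact h.1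
  have hall : ∀ z, z < P → z ≠ x → g x = g z := by
    intro z hz hzx
    by_cases hgz : g x = g z
    · exact hgz
    · exfalso
      have hf : f x = f z := by
        rcases hxor x hx z hz (fun h => hzx h.symm) with h | h
        · exact h.1
        · exact absurd h.1 hgz
      by_cases hzy : z = y
      · exact hgz (hzy ▸ hgxy)
      · rcases hxor z hz y hy hzy with h | h
        · exact hfxy (hf.trans h.1)
        · exact hgz (hgxy.trans h.1.symm)
  by_cases hsx : s = x
  · subst hsx
    exact hgst (hall t ht (fun h => hst h.symm))
  · have h1 : g x = g s := hall s hs hsx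
    by_cases htx : t = x
    · subst htx
      exact hgst (h1.symm)
    · exact hgst (h1.symm.trans (hall t ht htx))

theorem stmt18 (M p n M₁ : ℕ) [NeZero M] (hp : p.Prime) (hn : 1 ≤ n)
    (hM : M = p ^ n * M₁) (hpM₁ : ¬ p ∣ M₁) (hbig : M₁ < p)
    (A B : Finset (ZMod M)) (h : IsTiling M A B) :
    (∀ z : ZMod M, SplitsParity M p n A B (fiberSet M p z)) ∨
    (∀ z : ZMod M, SplitsParity M p n B A (fiberSet M p z)) := by
  subst hM
  have hM₁pos : 0 < M₁ := by
    rcases Nat.eq_zero_or_pos M₁ with h0 | h1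
    · exact absurd (by rw [h0, mul_zero]) (NeZero.ne (p ^ n * M₁))
    · exact h1
  haveI : NeZero M₁ := ⟨hM₁pos.ne'⟩
  haveI : NeZero (p ^ n) := ⟨pow_ne_zero n hp.pos.ne'⟩
  haveI : NeZero p := ⟨hp.pos.ne'⟩
  have hco : Nat.Coprime (p ^ n) M₁ := Nat.Coprime.pow_left n (hp.coprime_iff_not_dvd.2 hpM₁)
  have hpn_dvd : p ^ n ∣ p ^ n * M₁ := dvd_mul_right _ _
  have hpn1_dvd : p ^ (n - 1) ∣ p ^ n * M₁ :=
    dvd_mul_of_dvd_left (pow_dvd_pow p (by omega)) _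
  have hM₁_dvd : M₁ ∣ p ^ n * M₁ := dvd_mul_left _ _
  set π : ZMod (p ^ n * M₁) →+* ZMod (p ^ n) := ZMod.castHom hpn_dvd _ with hπ
  set τ : ZMod (p ^ n * M₁) →+* ZMod M₁ := ZMod.castHom hM₁_dvd _ with hτ
  set ρ : ZMod (p ^ n * M₁) →+* ZMod (p ^ (n - 1)) := ZMod.castHom hpn1_dvd _ with hρ
  set e := ZMod.chineseRemainder hco with he
  have hecomp : ∀ x : ZMod (p ^ n * M₁), e x = (π x, τ x) := by
    intro x
    have h0 : e x = (ZMod.cast x : ZMod (p ^ n) × ZMod M₁) := rfl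
    rw [h0, hπ, hτ, ZMod.castHom_apply, ZMod.castHom_apply]
    exact Prod.ext (Prod.fst_zmod_cast x) (Prod.snd_zmod_cast x)
  have hinj : ∀ x y : ZMod (p ^ n * M₁), π x = π y → τ x = τ y → x = y := by
    intro x y h1 h2
    apply e.injective
    rw [hecomp, hecomp, h1, h2]
  have hmk : ∀ (t : ZMod (p ^ n)) (r : ZMod M₁), IsUnit t → IsUnit r →
      ∃ s : ZMod (p ^ n * M₁), IsUnit s ∧ π s = t ∧ τ s = r := by
    intro t r ht hr
    obtain ⟨ut, hut⟩ := ht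
    obtain ⟨ur, hur⟩ := hr
    have hprod : IsUnit ((t, r) : ZMod (p ^ n) × ZMod M₁) := by
      refine ⟨⟨(t, r), (↑ut⁻¹, ↑ur⁻¹), ?_, ?_⟩, rfl⟩
      · show ((t, r) * ((↑ut⁻¹ : ZMod (p ^ n)), (↑ur⁻¹ : ZMod M₁)) : ZMod (p ^ n) × ZMod M₁) = 1
        rw [Prod.mk_mul_mk, ← hut, ← hur, Units.mul_inv, Units.mul_inv]
        rfl
      · show (((↑ut⁻¹ : ZMod (p ^ n)), (↑ur⁻¹ : ZMod M₁)) * (t, r) : ZMod (p ^ n) × ZMod M₁) = 1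
        rw [Prod.mk_mul_mk, ← hut, ← hur, Units.inv_mul, Units.inv_mul]
        rfl
    refine ⟨e.symm (t, r), hprod.map e.symm.toRingHom, ?_, ?_⟩
    · have hh := hecomp (e.symm (t, r))
      rw [e.apply_symm_apply] at hh
      exact (congrArg Prod.fst hh).symm
    · have hh := hecomp (e.symm (t, r))
      rw [e.apply_symm_apply] at hh
      exact (congrArg Prod.snd hh).symm
  -- the fiber step
  set dq : ℕ := p ^ n * M₁ / p with hdq
  have hps : p ^ n = p * p ^ (n - 1) := by
    conv_lhs => rw [show n = 1 + (n - 1) from by omega]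
    rw [pow_add, pow_one]
  have hdq' : dq = p ^ (n - 1) * M₁ := by
    rw [hdq, hps, mul_assoc, Nat.mul_div_cancel_left _ hp.pos]
  set x : ZMod (p ^ n * M₁) → ℕ → ZMod (p ^ n * M₁) :=
    fun z ν => z + ((ν * dq : ℕ) : ZMod (p ^ n * M₁)) with hx
  -- representation functions
  have hrepE : ∀ w : ZMod (p ^ n * M₁), ∃ ab : ZMod (p ^ n * M₁) × ZMod (p ^ n * M₁),
      (ab.1 ∈ A ∧ ab.2 ∈ B ∧ ab.1 + ab.2 = w) ∧
      ∀ a b : ZMod (p ^ n * M₁), a ∈ A → b ∈ B → a + b = w → a = ab.1 ∧ b = ab.2 := by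
    intro w
    obtain ⟨ab, hab, hu⟩ := h w
    exact ⟨ab, hab, fun a b ha hb heq => by
      have hh := hu (a, b) ⟨ha, hb, heq⟩
      exact ⟨congrArg Prod.fst hh, congrArg Prod.snd hh⟩⟩
  choose rep hrep1 hrep2 using hrepE
  set aR : ZMod (p ^ n * M₁) → ZMod (p ^ n * M₁) := fun w => (rep w).1 with haR
  set bR : ZMod (p ^ n * M₁) → ZMod (p ^ n * M₁) := fun w => (rep w).2 with hbR
  have haRmem : ∀ w, aR w ∈ A := fun w => (hrep1 w).1
  have hbRmem : ∀ w, bR w ∈ B := fun w => (hrep1 w).2.1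
  have habsum : ∀ w, aR w + bR w = w := fun w => (hrep1 w).2.2
  -- fiber membership of the points x z ν
  have hxmem : ∀ z : ZMod (p ^ n * M₁), ∀ ν : ℕ, ν < p →
      x z ν ∈ fiberSet (p ^ n * M₁) p z := by
    intro z ν hν
    exact ⟨ν, hν, rfl⟩
  -- Sigma set characterizations
  have hSigA : ∀ z : ZMod (p ^ n * M₁),
      ∀ a ∈ SigmaSet (p ^ n * M₁) A B (fiberSet (p ^ n * M₁) p z),
      ∃ ν < p, a = aR (x z ν) := by
    intro z a ha
    obtain ⟨haA, b, hbB, hab⟩ := ha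
    obtain ⟨ν, hν, hw⟩ := hab
    exact ⟨ν, hν, ((hrep2 (x z ν)) a b haA hbB hw).1⟩
  have hSigB : ∀ z : ZMod (p ^ n * M₁),
      ∀ b ∈ SigmaSet (p ^ n * M₁) B A (fiberSet (p ^ n * M₁) p z),
      ∃ ν < p, b = bR (x z ν) := by
    intro z b hb
    obtain ⟨hbB, a, haA, hab⟩ := hb
    obtain ⟨ν, hν, hw⟩ := hab
    refine ⟨ν, hν, ?_⟩
    exact ((hrep2 (x z ν)) a b haA hbB (by rw [add_comm]; exact hw)).2
  have hmemSigA : ∀ z : ZMod (p ^ n * M₁), ∀ ν : ℕ, ν < p →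
      aR (x z ν) ∈ SigmaSet (p ^ n * M₁) A B (fiberSet (p ^ n * M₁) p z) := by
    intro z ν hν
    exact ⟨haRmem _, bR (x z ν), hbRmem _, by rw [habsum]; exact hxmem z ν hν⟩
  have hmemSigB : ∀ z : ZMod (p ^ n * M₁), ∀ ν : ℕ, ν < p →
      bR (x z ν) ∈ SigmaSet (p ^ n * M₁) B A (fiberSet (p ^ n * M₁) p z) := by
    intro z ν hν
    exact ⟨hbRmem _, aR (x z ν), haRmem _, by rw [add_comm, habsum]; exact hxmem z ν hν⟩
  -- difference computations
  have hdiff : ∀ z : ZMod (p ^ n * M₁), ∀ ν μ : ℕ,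
      (aR (x z ν) - aR (x z μ)) + (bR (x z ν) - bR (x z μ)) = x z ν - x z μ := by
    intro z ν μ
    have e1 := habsum (x z ν)
    have e2 := habsum (x z μ)
    linear_combination e1 - e2
  have hxsub : ∀ z : ZMod (p ^ n * M₁), ∀ ν μ : ℕ,
      x z ν - x z μ = ((ν * dq : ℕ) : ZMod (p ^ n * M₁)) - ((μ * dq : ℕ) : ZMod (p ^ n * M₁)) := by
    intro z ν μ
    simp only [hx]
    ring
  have hπx : ∀ z : ZMod (p ^ n * M₁), ∀ ν μ : ℕ, π (x z ν - x z μ)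
      = (p : ZMod (p ^ n)) ^ (n - 1) *
        (((ν : ZMod (p ^ n)) - (μ : ZMod (p ^ n))) * (M₁ : ZMod (p ^ n))) := by
    intro z ν μ
    rw [hxsub, map_sub, map_natCast, map_natCast, hdq']
    push_cast
    ring
  have hτx : ∀ z : ZMod (p ^ n * M₁), ∀ ν μ : ℕ, τ (x z ν - x z μ) = 0 := by
    intro z ν μ
    have hτ0 : ∀ k : ℕ, τ ((k * dq : ℕ) : ZMod (p ^ n * M₁)) = 0 := by
      intro k
      rw [map_natCast, hdq', ZMod.natCast_eq_zero_iff]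
      exact Dvd.dvd.mul_left (dvd_mul_left M₁ (p ^ (n - 1))) k
    rw [hxsub, map_sub, hτ0, hτ0, sub_zero]
  have hρx : ∀ z : ZMod (p ^ n * M₁), ∀ ν μ : ℕ, ρ (x z ν - x z μ) = 0 := by
    intro z ν μ
    have hρ0 : ∀ k : ℕ, ρ ((k * dq : ℕ) : ZMod (p ^ n * M₁)) = 0 := by
      intro k
      rw [map_natCast, hdq', ZMod.natCast_eq_zero_iff]
      exact Dvd.dvd.mul_left (dvd_mul_right (p ^ (n - 1)) M₁) k
    rw [hxsub, map_sub, hρ0, hρ0, sub_zero]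
  have hρπ : ∀ y : ZMod (p ^ n * M₁), π y = 0 → ρ y = 0 := by
    intro y hy
    have hcomp : (ZMod.castHom (pow_dvd_pow p (show n - 1 ≤ n by omega))
          (ZMod (p ^ (n - 1)))).comp (ZMod.castHom hpn_dvd (ZMod (p ^ n)))
        = ZMod.castHom hpn1_dvd (ZMod (p ^ (n - 1))) := ZMod.castHom_comp _ _
    rw [hρ, ← hcomp, RingHom.comp_apply, ← hπ, hy, map_zero]
  have hcunit : ∀ ν μ : ℕ, ν < p → μ < p → ν ≠ μ →
      IsUnit ((ν : ZMod (p ^ n)) - (μ : ZMod (p ^ n))) := by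
    intro ν μ hν hμ hne
    rw [padic_isUnit_iff hp hn]
    rw [map_sub, map_natCast, map_natCast]
    intro h0
    rw [sub_eq_zero] at h0
    apply hne
    have := congrArg ZMod.val h0
    rwa [ZMod.val_cast_of_lt hν, ZMod.val_cast_of_lt hμ] at this
  have hM₁unit : IsUnit ((M₁ : ZMod (p ^ n))) := by
    rw [padic_isUnit_iff hp hn, map_natCast, Ne, ZMod.natCast_eq_zero_iff]
    exact hpM₁
  have hνμunit : ∀ ν μ : ℕ, ν < p → μ < p → ν ≠ μ →
      IsUnit ((((ν : ZMod (p ^ n)) - (μ : ZMod (p ^ n)))) * (M₁ : ZMod (p ^ n))) :=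
    fun ν μ hν hμ hne => (hcunit ν μ hν hμ hne).mul hM₁unit
  have hcancel : ∀ c u : ZMod (p ^ n), IsUnit u → c * u = 0 → c = 0 := by
    intro c u hu h0
    obtain ⟨U, hU⟩ := hu
    calc c = c * u * ↑U⁻¹ := by rw [← hU, mul_assoc, Units.mul_inv, mul_one]
    _ = 0 := by rw [h0, zero_mul]
  have hxne : ∀ z : ZMod (p ^ n * M₁), ∀ ν μ : ℕ, ν < p → μ < p → ν ≠ μ →
      x z ν - x z μ ≠ 0 := by
    intro z ν μ hν hμ hne h0
    have hcontr := hπx z ν μ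
    rw [h0, map_zero] at hcontr
    exact pow_pred_ne_zero hp hn
      (hcancel _ _ (hνμunit ν μ hν hμ hne) hcontr.symm)
  -- the per-pair xor
  have hxor : ∀ z : ZMod (p ^ n * M₁), ∀ ν < p, ∀ μ < p, ν ≠ μ →
      (π (aR (x z ν)) = π (aR (x z μ)) ∧ π (bR (x z ν)) ≠ π (bR (x z μ))) ∨
      (π (bR (x z ν)) = π (bR (x z μ)) ∧ π (aR (x z ν)) ≠ π (aR (x z μ))) := by
    intro z ν hν μ hμ hne
    have hsum : π (aR (x z ν) - aR (x z μ)) + π (bR (x z ν) - bR (x z μ))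
        = (p : ZMod (p ^ n)) ^ (n - 1) *
          ((((ν : ZMod (p ^ n)) - (μ : ZMod (p ^ n)))) * (M₁ : ZMod (p ^ n))) := by
      rw [← map_add, hdiff z ν μ, hπx]
    rcases pair_dichotomy hp hn (hνμunit ν μ hν hμ hne) hsum with
      ⟨h1, h2⟩ | ⟨h1, h2⟩ | ⟨h1, h2, t, ht, hteq⟩
    · left
      constructor
      · rwa [map_sub, sub_eq_zero] at h1
      · intro hbe
        exact h2 (by rw [map_sub, hbe, sub_self])
    · right
      constructor
      · rwa [map_sub, sub_eq_zero] at h1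
      · intro hae
        exact h2 (by rw [map_sub, hae, sub_self])
    · exfalso
      have hβne : bR (x z ν) ≠ bR (x z μ) := by
        intro heq
        exact h2 (by rw [map_sub, heq, sub_self])
      obtain ⟨s, hsU, hsπ, hsτ⟩ := hmk t (-1) ht (IsUnit.neg isUnit_one)
      have hτab : τ (aR (x z ν) - aR (x z μ)) + τ (bR (x z ν) - bR (x z μ)) = 0 := by
        rw [← map_add, hdiff z ν μ, hτx]
      have hseq : s * (aR (x z ν) - aR (x z μ)) = bR (x z ν) - bR (x z μ) := by
        apply hinj
        · rw [map_mul, hsπ]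
          exact hteq
        · rw [map_mul, hsτ]
          linear_combination -hτab
      exact divisor_exclusion h (haRmem _) (haRmem _) (hbRmem _) (hbRmem _) hβne hsU hseq
  -- per-fiber splitting
  have hfiber : ∀ z : ZMod (p ^ n * M₁),
      SplitsParity (p ^ n * M₁) p n A B (fiberSet (p ^ n * M₁) p z) ∨
      SplitsParity (p ^ n * M₁) p n B A (fiberSet (p ^ n * M₁) p z) := by
    intro z
    rcases eq_dichotomy (fun ν => π (aR (x z ν))) (fun ν => π (bR (x z ν)))
      (fun ν hν μ hμ hne => hxor z ν hν μ hμ hne) with hA | hB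
    · left
      constructor
      · intro a ha a' ha'
        obtain ⟨ν, hν, rfl⟩ := hSigA z a ha
        obtain ⟨μ, hμ, rfl⟩ := hSigA z a' ha'
        rw [dvd_val_iff hpn_dvd, ← hπ, map_sub, sub_eq_zero]
        exact hA ν hν μ hμ
      · intro b hb b' hb' hbne
        obtain ⟨ν, hν, rfl⟩ := hSigB z b hb
        obtain ⟨μ, hμ, rfl⟩ := hSigB z b' hb'
        have hνμ : ν ≠ μ := fun hh => hbne (by rw [hh])
        have hπa0 : π (aR (x z ν) - aR (x z μ)) = 0 := by
          rw [map_sub, sub_eq_zero]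
          exact hA ν hν μ hμ
        have hbx : bR (x z ν) - bR (x z μ) =
            (x z ν - x z μ) - (aR (x z ν) - aR (x z μ)) := by
          linear_combination hdiff z ν μ
        constructor
        · rw [dvd_val_iff hpn1_dvd, ← hρ, hbx, map_sub, hρx, hρπ _ hπa0, sub_zero]
        · rw [dvd_val_iff hpn_dvd, ← hπ, map_sub]
          intro h0
          rcases hxor z ν hν μ hμ hνμ with hc | hc
          · exact hc.2 (sub_eq_zero.1 h0)
          · exact hc.2 (hA ν hν μ hμ)
    · right
      constructor
      · intro b hb b' hb'
        obtain ⟨ν, hν, rfl⟩ := hSigB z b hb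
        obtain ⟨μ, hμ, rfl⟩ := hSigB z b' hb'
        rw [dvd_val_iff hpn_dvd, ← hπ, map_sub, sub_eq_zero]
        exact hB ν hν μ hμ
      · intro a ha a' ha' hane
        obtain ⟨ν, hν, rfl⟩ := hSigA z a ha
        obtain ⟨μ, hμ, rfl⟩ := hSigA z a' ha'
        have hνμ : ν ≠ μ := fun hh => hane (by rw [hh])
        have hπb0 : π (bR (x z ν) - bR (x z μ)) = 0 := by
          rw [map_sub, sub_eq_zero]
          exact hB ν hν μ hμ
        have hax : aR (x z ν) - aR (x z μ) =
            (x z ν - x z μ) - (bR (x z ν) - bR (x z μ)) := by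
          linear_combination hdiff z ν μ
        constructor
        · rw [dvd_val_iff hpn1_dvd, ← hρ, hax, map_sub, hρx, hρπ _ hπb0, sub_zero]
        · rw [dvd_val_iff hpn_dvd, ← hπ, map_sub]
          intro h0
          rcases hxor z ν hν μ hμ hνμ with hc | hc
          · exact hc.2 (hB ν hν μ hμ)
          · exact hc.2 (sub_eq_zero.1 h0)
  -- uniformity
  by_contra hcon
  push_neg at hcon
  obtain ⟨z₁, hz₁⟩ := hcon.1
  obtain ⟨z₂, hz₂⟩ := hcon.2
  have hBA₁ : SplitsParity (p ^ n * M₁) p n B A (fiberSet (p ^ n * M₁) p z₁) :=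
    (hfiber z₁).resolve_left hz₁
  have hAB₂ : SplitsParity (p ^ n * M₁) p n A B (fiberSet (p ^ n * M₁) p z₂) :=
    (hfiber z₂).resolve_right hz₂
  have hcard : Fintype.card (ZMod M₁) < Fintype.card (Fin p) := by
    rw [ZMod.card, Fintype.card_fin]
    exact hbig
  -- pigeonhole in fiber z₂, A-side constant
  have pigeonA : ∃ ν μ : ℕ, ν < p ∧ μ < p ∧ ν ≠ μ ∧ aR (x z₂ ν) = aR (x z₂ μ) := by
    obtain ⟨ν, μ, hνμ, hfe⟩ := Fintype.exists_ne_map_eq_of_card_lt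
      (fun ν : Fin p => τ (aR (x z₂ (ν : ℕ)))) hcard
    refine ⟨ν, μ, ν.isLt, μ.isLt, fun hh => hνμ (Fin.ext hh), ?_⟩
    apply hinj _ _ ?_ hfe
    have hdv := hAB₂.1 _ (hmemSigA z₂ ν ν.isLt) _ (hmemSigA z₂ μ μ.isLt)
    rw [dvd_val_iff hpn_dvd, ← hπ, map_sub, sub_eq_zero] at hdv
    exact hdv
  have pigeonB : ∃ ν μ : ℕ, ν < p ∧ μ < p ∧ ν ≠ μ ∧ bR (x z₁ ν) = bR (x z₁ μ) := by
    obtain ⟨ν, μ, hνμ, hfe⟩ := Fintype.exists_ne_map_eq_of_card_lt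
      (fun ν : Fin p => τ (bR (x z₁ (ν : ℕ)))) hcard
    refine ⟨ν, μ, ν.isLt, μ.isLt, fun hh => hνμ (Fin.ext hh), ?_⟩
    apply hinj _ _ ?_ hfe
    have hdv := hBA₁.1 _ (hmemSigB z₁ ν ν.isLt) _ (hmemSigB z₁ μ μ.isLt)
    rw [dvd_val_iff hpn_dvd, ← hπ, map_sub, sub_eq_zero] at hdv
    exact hdv
  obtain ⟨ν, μ, hν, hμ, hνμ, haeq⟩ := pigeonA
  obtain ⟨ν', μ', hν', hμ', hνμ', hbeq⟩ := pigeonB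
  have hbdiff : bR (x z₂ ν) - bR (x z₂ μ) = x z₂ ν - x z₂ μ := by
    linear_combination hdiff z₂ ν μ - haeq
  have hadiff : aR (x z₁ ν') - aR (x z₁ μ') = x z₁ ν' - x z₁ μ' := by
    linear_combination hdiff z₁ ν' μ' - hbeq
  have hbne2 : bR (x z₂ ν) ≠ bR (x z₂ μ) := by
    intro hh
    exact hxne z₂ ν μ hν hμ hνμ (by rw [← hbdiff, hh, sub_self])
  obtain ⟨C', hC'⟩ := hcunit ν' μ' hν' hμ' hνμ'
  have htU : IsUnit ((((ν : ZMod (p ^ n)) - (μ : ZMod (p ^ n)))) * ↑C'⁻¹) :=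
    (hcunit ν μ hν hμ hνμ).mul (Units.isUnit _)
  obtain ⟨s, hsU, hsπ, hsτ⟩ := hmk _ 1 htU isUnit_one
  have hseq : s * (aR (x z₁ ν') - aR (x z₁ μ')) = bR (x z₂ ν) - bR (x z₂ μ) := by
    apply hinj
    · rw [map_mul, hsπ, hadiff, hbdiff, hπx, hπx, ← hC']
      have hCC : (↑C'⁻¹ : ZMod (p ^ n)) * ↑C' = 1 := C'.inv_mul
      calc ((ν : ZMod (p ^ n)) - (μ : ZMod (p ^ n))) * ↑C'⁻¹ *
            ((p : ZMod (p ^ n)) ^ (n - 1) * ((↑C' : ZMod (p ^ n)) * (M₁ : ZMod (p ^ n))))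
          = (p : ZMod (p ^ n)) ^ (n - 1) *
              (((ν : ZMod (p ^ n)) - (μ : ZMod (p ^ n))) * (M₁ : ZMod (p ^ n))) *
              ((↑C'⁻¹ : ZMod (p ^ n)) * ↑C') := by ring
      _ = (p : ZMod (p ^ n)) ^ (n - 1) *
              (((ν : ZMod (p ^ n)) - (μ : ZMod (p ^ n))) * (M₁ : ZMod (p ^ n))) := by
          rw [hCC, mul_one]
    · rw [map_mul, hsτ, one_mul, hadiff, hbdiff, hτx, hτx]
  exact divisor_exclusion h (haRmem _) (haRmem _) (hbRmem _) (hbRmem _) hbne2 hsU hseq
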